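/- arXiv:1910.09012 — 2 statements merged into one kernel-verified Lean document; each statement's English description precedes it below -/
import Mathlib

section
/- There exists a linear form L ∈ S_1 such that Q = L² if and only if D_i = 0 for all i = 1, …, 6. -/
noncomputable section

/-- The skew-commutation relation `z_j z_i = μ_{ij} z_i z_j` on the free algebra. -/
inductive SkewRel (k : Type*) [Field k] (μ : Fin 3 → Fin 3 → k) :
    FreeAlgebra k (Fin 3) → FreeAlgebra k (Fin 3) → Prop
  | rel (i j : Fin 3) :
      SkewRel k μ (FreeAlgebra.ι k j * FreeAlgebra.ι k i)
        (μ i j • (FreeAlgebra.ι k i * FreeAlgebra.ι k j))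

/-- The generators `z_1, z_2, z_3` of `S = k⟨z_1,z_2,z_3⟩/(z_j z_i - μ_{ij} z_i z_j)`. -/
def z (k : Type*) [Field k] (μ : Fin 3 → Fin 3 → k) (i : Fin 3) :
    RingQuot (SkewRel k μ) :=
  RingQuot.mkAlgHom k (SkewRel k μ) (FreeAlgebra.ι k i)

section AuxAlg
variable {k : Type*} [Field k]

lemma sqcases {x y : k} (h : x * x = y * y) : x = y ∨ x = -y := by
  have h' : (x - y) * (x + y) = 0 := by linear_combination h
  rcases mul_eq_zero.mp h' with h | h
  · exact Or.inl (sub_eq_zero.mp h)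
  · exact Or.inr (eq_neg_of_add_eq_zero_left h)

lemma signs {x₀ X y₀ Y : k} (hx : x₀ * x₀ = X * X) (hy : y₀ * y₀ = Y * Y)
    (hxy : x₀ * y₀ = X * Y) : ∃ ε : k, ε * ε = 1 ∧ ε * x₀ = X ∧ ε * y₀ = Y := by
  by_cases h0 : x₀ = 0
  · have hX : X = 0 := by
      have : X * X = 0 := by rw [← hx, h0]; ring
      exact mul_self_eq_zero.mp this
    rcases sqcases hy with h | h
    · exact ⟨1, by ring, by rw [h0, hX]; ring, by rw [h]; ring⟩
    · exact ⟨-1, by ring, by rw [h0, hX]; ring, by rw [h]; ring⟩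
  · have hX0 : X ≠ 0 := by
      intro hX; apply h0
      have : x₀ * x₀ = 0 := by rw [hx, hX]; ring
      exact mul_self_eq_zero.mp this
    have key : X * y₀ = Y * x₀ := by
      have h1 : (X * y₀ - Y * x₀) * x₀ = 0 := by linear_combination X * hxy - Y * hx
      rcases mul_eq_zero.mp h1 with h | h
      · exact sub_eq_zero.mp h
      · exact absurd h h0
    refine ⟨X / x₀, ?_, ?_, ?_⟩
    · field_simp; linear_combination -hx
    · field_simp
    · field_simp; linear_combination key

lemma sqrt' [IsAlgClosed k] (x : k) : ∃ y : k, y ^ 2 = x :=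
  IsAlgClosed.exists_pow_nat_eq x zero_lt_two

lemma keylemma [IsAlgClosed k] (h2 : (2 : k) ≠ 0) (u v w a b c d e f : k)
    (D1 : 4 * d ^ 2 = u ^ 2 * a * b) (D2 : 4 * e ^ 2 = v ^ 2 * a * c)
    (D3 : 4 * f ^ 2 = w ^ 2 * b * c) (D6 : 2 * v * d * f = u * w * b * e) :
    ∃ α β γ : k, a = α * α ∧ b = β * β ∧ c = γ * γ ∧
      2 * d = u * (α * β) ∧ 2 * e = v * (α * γ) ∧ 2 * f = w * (β * γ) := by
  have h4 : (4 : k) ≠ 0 := by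
    intro h; apply h2
    have : (2 : k) * 2 = 0 := by rw [← h]; norm_num
    rcases mul_eq_zero.mp this with h | h <;> exact h
  obtain ⟨β₀, hb⟩ := sqrt' b
  obtain ⟨γ₀, hcc⟩ := sqrt' c
  subst hb; subst hcc
  by_cases ha : a = 0
  · subst ha
    have hd : d = 0 := by
      have h' : d ^ 2 = 0 :=
        mul_left_cancel₀ h4 (show (4 : k) * d ^ 2 = 4 * 0 by linear_combination D1)
      exact pow_eq_zero_iff (by norm_num) |>.mp h'
    have he : e = 0 := by
      have h' : e ^ 2 = 0 :=
        mul_left_cancel₀ h4 (show (4 : k) * e ^ 2 = 4 * 0 by linear_combination D2)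
      exact pow_eq_zero_iff (by norm_num) |>.mp h'
    have hsq : (w * (β₀ * γ₀)) * (w * (β₀ * γ₀)) = (2 * f) * (2 * f) := by
      linear_combination -D3
    rcases sqcases hsq with h | h
    · exact ⟨0, β₀, γ₀, by ring, by ring, by ring, by rw [hd]; ring,
        by rw [he]; ring, h.symm⟩
    · exact ⟨0, β₀, -γ₀, by ring, by ring, by ring, by rw [hd]; ring,
        by rw [he]; ring, by linear_combination h⟩
  · obtain ⟨α, hA⟩ := sqrt' a
    subst hA
    have hα : α ≠ 0 := fun h => ha (by rw [h]; ring)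
    by_cases hv : v = 0
    · subst hv
      have he : e = 0 := by
        have h' : e ^ 2 = 0 :=
          mul_left_cancel₀ h4 (show (4 : k) * e ^ 2 = 4 * 0 by linear_combination D2)
        exact pow_eq_zero_iff (by norm_num) |>.mp h'
      have hsq1 : (u * (α * β₀)) * (u * (α * β₀)) = (2 * d) * (2 * d) := by
        linear_combination -D1
      have step : ∃ β : k, β₀ ^ 2 = β * β ∧ 2 * d = u * (α * β) := by
        rcases sqcases hsq1 with h | h
        · exact ⟨β₀, by ring, h.symm⟩
        · exact ⟨-β₀, by ring, by linear_combination h⟩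
      obtain ⟨β, hbb, hdd⟩ := step
      have hsq2 : (w * (β * γ₀)) * (w * (β * γ₀)) = (2 * f) * (2 * f) := by
        linear_combination -D3 - (w ^ 2 * γ₀ ^ 2) * hbb
      rcases sqcases hsq2 with h | h
      · exact ⟨α, β, γ₀, by ring, hbb, by ring, hdd, by rw [he]; ring, h.symm⟩
      · exact ⟨α, β, -γ₀, by ring, hbb, by ring, hdd, by rw [he]; ring,
          by linear_combination h⟩
    · set γ : k := 2 * e / (v * α) with hγ
      have hvα : v * α ≠ 0 := mul_ne_zero hv hα
      have he2 : 2 * e = v * (α * γ) := by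
        rw [hγ]; field_simp
      have hcγ : γ₀ ^ 2 = γ * γ := by
        have h1 : (v * α) * ((v * α) * (γ * γ)) = (v * α) * ((v * α) * γ₀ ^ 2) := by
          rw [hγ]
          field_simp
          linear_combination D2
        exact (mul_left_cancel₀ hvα (mul_left_cancel₀ hvα h1)).symm
      have hx : (u * (α * β₀)) * (u * (α * β₀)) = (2 * d) * (2 * d) := by
        linear_combination -D1
      have hy : (w * (β₀ * γ)) * (w * (β₀ * γ)) = (2 * f) * (2 * f) := by
        linear_combination -D3 - (w ^ 2 * β₀ ^ 2) * hcγ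
      have hxy' : v * ((u * (α * β₀)) * (w * (β₀ * γ))) = v * ((2 * d) * (2 * f)) := by
        linear_combination (-2) * D6 - (u * w * β₀ ^ 2) * he2
      have hxy := mul_left_cancel₀ hv hxy'
      obtain ⟨ε, hε, hεx, hεy⟩ := signs hx hy hxy
      exact ⟨α, ε * β₀, γ, by ring, by linear_combination (-β₀ ^ 2) * hε, hcγ,
        by linear_combination -hεx, he2, by linear_combination -hεy⟩

/-- product on degree-1 parts -/
def mfun (μ : Fin 3 → Fin 3 → k) (x y : Fin 3 → k) : Fin 3 → Fin 3 → k := fun i j =>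
  if i < j then x i * y j + μ i j * (x j * y i) else if i = j then x i * y i else 0

@[ext] structure Amod (k : Type*) [Field k] (μ : Fin 3 → Fin 3 → k) where
  s : k
  v : Fin 3 → k
  w : Fin 3 → Fin 3 → k

namespace Amod
variable {μ : Fin 3 → Fin 3 → k}
instance : Zero (Amod k μ) := ⟨⟨0, fun _ => 0, fun _ _ => 0⟩⟩
instance : Add (Amod k μ) := ⟨fun x y => ⟨x.s + y.s, fun i => x.v i + y.v i, fun i j => x.w i j + y.w i j⟩⟩
instance : Neg (Amod k μ) := ⟨fun x => ⟨-x.s, fun i => -x.v i, fun i j => -x.w i j⟩⟩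
instance : One (Amod k μ) := ⟨⟨1, fun _ => 0, fun _ _ => 0⟩⟩
instance : Mul (Amod k μ) := ⟨fun x y => ⟨x.s * y.s, fun i => x.s * y.v i + y.s * x.v i,
  fun i j => x.s * y.w i j + y.s * x.w i j + mfun μ x.v y.v i j⟩⟩
instance : SMul k (Amod k μ) := ⟨fun r x => ⟨r * x.s, fun i => r * x.v i, fun i j => r * x.w i j⟩⟩

@[simp] lemma zero_s : (0 : Amod k μ).s = 0 := rfl
@[simp] lemma zero_v (i) : (0 : Amod k μ).v i = 0 := rfl
@[simp] lemma zero_w (i j) : (0 : Amod k μ).w i j = 0 := rfl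
@[simp] lemma one_s : (1 : Amod k μ).s = 1 := rfl
@[simp] lemma one_v (i) : (1 : Amod k μ).v i = 0 := rfl
@[simp] lemma one_w (i j) : (1 : Amod k μ).w i j = 0 := rfl
@[simp] lemma add_s (x y : Amod k μ) : (x + y).s = x.s + y.s := rfl
@[simp] lemma add_v (x y : Amod k μ) (i) : (x + y).v i = x.v i + y.v i := rfl
@[simp] lemma add_w (x y : Amod k μ) (i j) : (x + y).w i j = x.w i j + y.w i j := rfl
@[simp] lemma neg_s (x : Amod k μ) : (-x).s = -x.s := rfl
@[simp] lemma neg_v (x : Amod k μ) (i) : (-x).v i = -x.v i := rfl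
@[simp] lemma neg_w (x : Amod k μ) (i j) : (-x).w i j = -x.w i j := rfl
@[simp] lemma mul_s (x y : Amod k μ) : (x * y).s = x.s * y.s := rfl
@[simp] lemma mul_v (x y : Amod k μ) (i) : (x * y).v i = x.s * y.v i + y.s * x.v i := rfl
@[simp] lemma mul_w (x y : Amod k μ) (i j) :
    (x * y).w i j = x.s * y.w i j + y.s * x.w i j + mfun μ x.v y.v i j := rfl
@[simp] lemma smul_s (r : k) (x : Amod k μ) : (r • x).s = r * x.s := rfl
@[simp] lemma smul_v (r : k) (x : Amod k μ) (i) : (r • x).v i = r * x.v i := rfl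
@[simp] lemma smul_w (r : k) (x : Amod k μ) (i j) : (r • x).w i j = r * x.w i j := rfl

instance : AddCommGroup (Amod k μ) where
  add_assoc x y z := by ext <;> simp <;> ring
  zero_add x := by ext <;> simp
  add_zero x := by ext <;> simp
  add_comm x y := by ext <;> simp <;> ring
  neg_add_cancel x := by ext <;> simp
  nsmul := nsmulRec
  zsmul := zsmulRec

instance : Ring (Amod k μ) :=
  { (inferInstance : AddCommGroup (Amod k μ)) with
    left_distrib := fun x y z => by ext <;> simp [mfun] <;> first | (split_ifs <;> ring) | ring
    right_distrib := fun x y z => by ext <;> simp [mfun] <;> first | (split_ifs <;> ring) | ring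
    zero_mul := fun x => by ext <;> simp [mfun]
    mul_zero := fun x => by ext <;> simp [mfun]
    mul_assoc := fun x y z => by ext <;> simp [mfun] <;> first | (split_ifs <;> ring) | ring
    one_mul := fun x => by ext <;> simp [mfun]
    mul_one := fun x => by ext <;> simp [mfun] }

instance : Module k (Amod k μ) where
  one_smul x := by ext <;> simp
  mul_smul r s x := by ext <;> simp <;> ring
  smul_zero r := by ext <;> simp
  smul_add r x y := by ext <;> simp <;> ring
  add_smul r s x := by ext <;> simp <;> ring
  zero_smul x := by ext <;> simp

instance : Algebra k (Amod k μ) :=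
  Algebra.ofModule
    (fun r x y => by ext <;> simp [mfun] <;> first | (split_ifs <;> ring) | ring)
    (fun r x y => by ext <;> simp [mfun] <;> first | (split_ifs <;> ring) | ring)

/-- degree-one generator -/
def gen (μ : Fin 3 → Fin 3 → k) (i : Fin 3) : Amod k μ := ⟨0, Pi.single i 1, fun _ _ => 0⟩

@[simp] lemma gen_s (i) : (gen μ i).s = 0 := rfl
@[simp] lemma gen_v (i j) : (gen μ i).v j = (Pi.single i 1 : Fin 3 → k) j := rfl
@[simp] lemma gen_w (i p q) : (gen μ i).w p q = 0 := rfl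

end Amod

variable (μ : Fin 3 → Fin 3 → k)

def phi : FreeAlgebra k (Fin 3) →ₐ[k] Amod k μ :=
  FreeAlgebra.lift k (Amod.gen μ)

@[simp] lemma phi_ι (i : Fin 3) : phi μ (FreeAlgebra.ι k i) = Amod.gen μ i := by
  simp [phi]

lemma phi_rel (hμdiag : ∀ i, μ i i = 1) (hμ : ∀ i j, μ i j * μ j i = 1)
    ⦃x y : FreeAlgebra k (Fin 3)⦄ (h : SkewRel k μ x y) : phi μ x = phi μ y := by
  obtain ⟨i, j⟩ := h
  simp only [map_mul, map_smul, phi_ι]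
  ext p q
  · simp
  · simp
  · fin_cases i <;> fin_cases j <;> fin_cases p <;> fin_cases q <;>
      simp [mfun, Pi.single_apply, hμdiag] <;>
      first | rfl | exact (hμ _ _).symm

def psi (hμdiag : ∀ i, μ i i = 1) (hμ : ∀ i j, μ i j * μ j i = 1) :
    RingQuot (SkewRel k μ) →ₐ[k] Amod k μ :=
  RingQuot.liftAlgHom k ⟨phi μ, phi_rel μ hμdiag hμ⟩

lemma psi_z (hμdiag : ∀ i, μ i i = 1) (hμ : ∀ i j, μ i j * μ j i = 1) (i : Fin 3) :
    psi μ hμdiag hμ (z k μ i) = Amod.gen μ i := by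
  simp [psi, z, RingQuot.liftAlgHom_mkAlgHom_apply]

end AuxAlg

theorem stmt11 (k : Type*) [Field k] [IsAlgClosed k] (h2 : (2 : k) ≠ 0)
    (μ : Fin 3 → Fin 3 → k) (hμdiag : ∀ i, μ i i = 1)
    (hμ : ∀ i j, μ i j * μ j i = 1)
    (a b c d e f : k) :
    (∃ L ∈ (Submodule.span k ({z k μ 0, z k μ 1, z k μ 2} : Set (RingQuot (SkewRel k μ)))),
        (a • (z k μ 0 * z k μ 0) + b • (z k μ 1 * z k μ 1) + c • (z k μ 2 * z k μ 2) +
      (2 * d) • (z k μ 0 * z k μ 1) + (2 * e) • (z k μ 0 * z k μ 2) +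
      (2 * f) • (z k μ 1 * z k μ 2)) = L ^ 2) ↔
      (4 * d ^ 2 - (1 + μ 0 1) ^ 2 * a * b = 0 ∧
      4 * e ^ 2 - (1 + μ 0 2) ^ 2 * a * c = 0 ∧
      4 * f ^ 2 - (1 + μ 1 2) ^ 2 * b * c = 0 ∧
      2 * (1 + μ 1 2) * d * e - (1 + μ 0 1) * (1 + μ 0 2) * a * f = 0 ∧
      2 * (1 + μ 0 1) * e * f - (1 + μ 0 2) * (1 + μ 1 2) * c * d = 0 ∧
      2 * (1 + μ 0 2) * d * f - (1 + μ 0 1) * (1 + μ 1 2) * b * e = 0) := by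
  have r01 : z k μ 1 * z k μ 0 = μ 0 1 • (z k μ 0 * z k μ 1) := by
    simpa [z, map_mul, map_smul] using
      RingQuot.mkAlgHom_rel k (SkewRel.rel (k := k) (μ := μ) 0 1)
  have r02 : z k μ 2 * z k μ 0 = μ 0 2 • (z k μ 0 * z k μ 2) := by
    simpa [z, map_mul, map_smul] using
      RingQuot.mkAlgHom_rel k (SkewRel.rel (k := k) (μ := μ) 0 2)
  have r12 : z k μ 2 * z k μ 1 = μ 1 2 • (z k μ 1 * z k μ 2) := by
    simpa [z, map_mul, map_smul] using
      RingQuot.mkAlgHom_rel k (SkewRel.rel (k := k) (μ := μ) 1 2)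
  constructor
  · rintro ⟨L, hL, hQ⟩
    rw [show ({z k μ 0, z k μ 1, z k μ 2} : Set (RingQuot (SkewRel k μ))) =
      insert (z k μ 0) (insert (z k μ 1) {z k μ 2}) from rfl] at hL
    rw [Submodule.mem_span_insert] at hL
    obtain ⟨α, L1, hL1, rfl⟩ := hL
    rw [Submodule.mem_span_insert] at hL1
    obtain ⟨β, L0, hL0, rfl⟩ := hL1
    rw [Submodule.mem_span_singleton] at hL0
    obtain ⟨γ, rfl⟩ := hL0
    have key := congrArg (psi μ hμdiag hμ) hQ
    simp only [map_add, map_smul, map_mul, map_pow, psi_z] at key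
    have h00 := congrFun (congrFun (congrArg Amod.w key) 0) 0
    have h11 := congrFun (congrFun (congrArg Amod.w key) 1) 1
    have h22 := congrFun (congrFun (congrArg Amod.w key) 2) 2
    have h01 := congrFun (congrFun (congrArg Amod.w key) 0) 1
    have h02 := congrFun (congrFun (congrArg Amod.w key) 0) 2
    have h12 := congrFun (congrFun (congrArg Amod.w key) 1) 2
    simp [pow_two, mfun, Pi.single_apply] at h00 h11 h22 h01 h02 h12
    have hA : a = α * α := by linear_combination h00
    have hB : b = β * β := by linear_combination h11
    have hC : c = γ * γ := by linear_combination h22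
    have hD : d = (1 + μ 0 1) * (α * β) / 2 := by
      rw [eq_div_iff h2]; linear_combination h01
    have hE : e = (1 + μ 0 2) * (α * γ) / 2 := by
      rw [eq_div_iff h2]; linear_combination h02
    have hF : f = (1 + μ 1 2) * (β * γ) / 2 := by
      rw [eq_div_iff h2]; linear_combination h12
    subst hA hB hC hD hE hF
    refine ⟨by field_simp; ring, by field_simp; ring, by field_simp; ring,
      by field_simp; ring, by field_simp; ring, by field_simp; ring⟩
  · rintro ⟨D1, D2, D3, _D4, _D5, D6⟩
    obtain ⟨α, β, γ, hA, hB, hC, hD, hE, hF⟩ :=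
      keylemma h2 (1 + μ 0 1) (1 + μ 0 2) (1 + μ 1 2) a b c d e f
        (by linear_combination D1) (by linear_combination D2)
        (by linear_combination D3) (by linear_combination D6)
    refine ⟨α • z k μ 0 + (β • z k μ 1 + γ • z k μ 2), ?_, ?_⟩
    · refine Submodule.add_mem _ (Submodule.smul_mem _ _ ?_)
        (Submodule.add_mem _ (Submodule.smul_mem _ _ ?_) (Submodule.smul_mem _ _ ?_)) <;>
        apply Submodule.subset_span <;> simp
    · rw [pow_two]
      simp only [add_mul, mul_add, smul_mul_assoc, mul_smul_comm, smul_smul]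
      rw [r01, r02, r12]
      simp only [smul_smul]
      rw [hA, hB, hC, hD, hE, hF]
      module
end
end

section
/- Assume a ≠ 0. Then there exist linear forms L_1, L_2 ∈ S_1 such that Q = L_1 L_2 if and only if there exist X, Y ∈ k with X² = d² − μ_{12}ab and Y² = e² − μ_{13}ac such that D8(X,Y) = 0, where D8(X,Y) = μ_{21}(d + X)(e − Y) + μ_{23}μ_{31}(d − X)(e + Y) − 2af. -/
noncomputable section

section Aux

/-- membership in the span of three vectors -/
lemma mem_span_triple {k : Type*} [Field k] {M : Type*} [AddCommGroup M] [Module k M]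
    {x y w u : M} (h : u ∈ Submodule.span k ({x, y, w} : Set M)) :
    ∃ α β γ : k, u = α • x + β • y + γ • w := by
  rw [Submodule.mem_span_insert] at h
  obtain ⟨α, u', hu', rfl⟩ := h
  rw [Submodule.mem_span_insert] at hu'
  obtain ⟨β, u'', hu'', rfl⟩ := hu'
  rw [Submodule.mem_span_singleton] at hu''
  obtain ⟨γ, rfl⟩ := hu''
  exact ⟨α, β, γ, by abel⟩

variable {k : Type*} [Field k] {μ : Fin 3 → Fin 3 → k}

lemma z_rel (i j : Fin 3) :
    z k μ j * z k μ i = μ i j • (z k μ i * z k μ j) := by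
  have h := RingQuot.mkAlgHom_rel k (SkewRel.rel (k := k) (μ := μ) i j)
  simpa [z, map_mul, map_smul] using h

lemma mul_linear (α0 α1 α2 β0 β1 β2 : k) :
    (α0 • z k μ 0 + α1 • z k μ 1 + α2 • z k μ 2) *
      (β0 • z k μ 0 + β1 • z k μ 1 + β2 • z k μ 2)
    = (α0 * β0) • (z k μ 0 * z k μ 0) + (α1 * β1) • (z k μ 1 * z k μ 1)
      + (α2 * β2) • (z k μ 2 * z k μ 2)
      + (α0 * β1 + μ 0 1 * (α1 * β0)) • (z k μ 0 * z k μ 1)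
      + (α0 * β2 + μ 0 2 * (α2 * β0)) • (z k μ 0 * z k μ 2)
      + (α1 * β2 + μ 1 2 * (α2 * β1)) • (z k μ 1 * z k μ 2) := by
  simp only [add_mul, mul_add, smul_mul_assoc, mul_smul_comm, smul_smul]
  rw [z_rel (μ := μ) 0 1, z_rel (μ := μ) 0 2, z_rel (μ := μ) 1 2]
  module

end Aux

/-- Truncated skew algebra: k ⊕ V ⊕ V⊗V (normal-ordered), everything of degree ≥ 3 killed. -/
@[ext] structure Tri (k : Type*) [Field k] (μ : Fin 3 → Fin 3 → k) where
  s : k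
  v : Fin 3 → k
  m : Fin 3 → Fin 3 → k

namespace Tri

variable {k : Type*} [Field k] {μ : Fin 3 → Fin 3 → k}

instance : Zero (Tri k μ) := ⟨⟨0, 0, 0⟩⟩
instance : Add (Tri k μ) := ⟨fun x y => ⟨x.s + y.s, x.v + y.v, x.m + y.m⟩⟩
instance : Neg (Tri k μ) := ⟨fun x => ⟨-x.s, -x.v, -x.m⟩⟩
instance : SMul k (Tri k μ) := ⟨fun r x => ⟨r * x.s, r • x.v, r • x.m⟩⟩

@[simp] lemma zero_s : (0 : Tri k μ).s = 0 := rfl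
@[simp] lemma zero_v (i) : (0 : Tri k μ).v i = 0 := rfl
@[simp] lemma zero_m (i j) : (0 : Tri k μ).m i j = 0 := rfl
@[simp] lemma add_s (x y : Tri k μ) : (x + y).s = x.s + y.s := rfl
@[simp] lemma add_v (x y : Tri k μ) (i) : (x + y).v i = x.v i + y.v i := rfl
@[simp] lemma add_m (x y : Tri k μ) (i j) : (x + y).m i j = x.m i j + y.m i j := rfl
@[simp] lemma neg_s (x : Tri k μ) : (-x).s = -x.s := rfl
@[simp] lemma neg_v (x : Tri k μ) (i) : (-x).v i = -x.v i := rfl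
@[simp] lemma neg_m (x : Tri k μ) (i j) : (-x).m i j = -x.m i j := rfl
@[simp] lemma smul_s (r : k) (x : Tri k μ) : (r • x).s = r * x.s := rfl
@[simp] lemma smul_v (r : k) (x : Tri k μ) (i) : (r • x).v i = r * x.v i := rfl
@[simp] lemma smul_m (r : k) (x : Tri k μ) (i j) : (r • x).m i j = r * x.m i j := rfl

lemma ext_iff' {x y : Tri k μ} :
    x = y ↔ x.s = y.s ∧ (∀ i, x.v i = y.v i) ∧ (∀ i j, x.m i j = y.m i j) := by
  constructor
  · rintro rfl; exact ⟨rfl, fun _ => rfl, fun _ _ => rfl⟩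
  · rintro ⟨h1, h2, h3⟩; ext <;> [exact h1; exact h2 _; exact h3 _ _]

instance : AddCommGroup (Tri k μ) where
  add_assoc x y z := by rw [ext_iff']; refine ⟨?_, fun i => ?_, fun i j => ?_⟩ <;> simp <;> ring
  zero_add x := by rw [ext_iff']; refine ⟨?_, fun i => ?_, fun i j => ?_⟩ <;> simp
  add_zero x := by rw [ext_iff']; refine ⟨?_, fun i => ?_, fun i j => ?_⟩ <;> simp
  add_comm x y := by rw [ext_iff']; refine ⟨?_, fun i => ?_, fun i j => ?_⟩ <;> simp <;> ring
  neg_add_cancel x := by rw [ext_iff']; refine ⟨?_, fun i => ?_, fun i j => ?_⟩ <;> simp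
  nsmul := nsmulRec
  zsmul := zsmulRec

instance : Module k (Tri k μ) where
  one_smul x := by rw [ext_iff']; refine ⟨?_, fun i => ?_, fun i j => ?_⟩ <;> simp
  mul_smul r s x := by rw [ext_iff']; refine ⟨?_, fun i => ?_, fun i j => ?_⟩ <;> simp <;> ring
  smul_zero r := by rw [ext_iff']; refine ⟨?_, fun i => ?_, fun i j => ?_⟩ <;> simp
  smul_add r x y := by rw [ext_iff']; refine ⟨?_, fun i => ?_, fun i j => ?_⟩ <;> simp <;> ring
  add_smul r s x := by rw [ext_iff']; refine ⟨?_, fun i => ?_, fun i j => ?_⟩ <;> simp <;> ring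
  zero_smul x := by rw [ext_iff']; refine ⟨?_, fun i => ?_, fun i j => ?_⟩ <;> simp

/-- Normal-ordered product of two degree-1 vectors. -/
def N (μ : Fin 3 → Fin 3 → k) (v w : Fin 3 → k) : Fin 3 → Fin 3 → k :=
  fun i j => if i < j then v i * w j + μ i j * v j * w i else if i = j then v i * w i else 0

instance : One (Tri k μ) := ⟨⟨1, 0, 0⟩⟩
instance : Mul (Tri k μ) :=
  ⟨fun x y => ⟨x.s * y.s, x.s • y.v + y.s • x.v, x.s • y.m + y.s • x.m + N μ x.v y.v⟩⟩

@[simp] lemma one_s : (1 : Tri k μ).s = 1 := rfl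
@[simp] lemma one_v (i) : (1 : Tri k μ).v i = 0 := rfl
@[simp] lemma one_m (i j) : (1 : Tri k μ).m i j = 0 := rfl
@[simp] lemma mul_s (x y : Tri k μ) : (x * y).s = x.s * y.s := rfl
@[simp] lemma mul_v (x y : Tri k μ) (i) : (x * y).v i = x.s * y.v i + y.s * x.v i := rfl
@[simp] lemma mul_m (x y : Tri k μ) (i j) :
    (x * y).m i j = x.s * y.m i j + y.s * x.m i j + N μ x.v y.v i j := rfl

lemma N_apply (v w : Fin 3 → k) (i j) :
    N μ v w i j
      = if i < j then v i * w j + μ i j * v j * w i else if i = j then v i * w i else 0 := rfl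

instance : Ring (Tri k μ) where
  __ := (inferInstance : AddCommGroup (Tri k μ))
  mul_assoc x y w := by
    rw [ext_iff']; refine ⟨?_, fun i => ?_, fun i j => ?_⟩ <;> simp [N_apply] <;>
      (try split_ifs) <;> ring
  one_mul x := by rw [ext_iff']; refine ⟨?_, fun i => ?_, fun i j => ?_⟩ <;> simp [N_apply] <;>
      (try split_ifs) <;> ring
  mul_one x := by rw [ext_iff']; refine ⟨?_, fun i => ?_, fun i j => ?_⟩ <;> simp [N_apply] <;>
      (try split_ifs) <;> ring
  left_distrib x y w := by
    rw [ext_iff']; refine ⟨?_, fun i => ?_, fun i j => ?_⟩ <;> simp [N_apply] <;>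
      (try split_ifs) <;> ring
  right_distrib x y w := by
    rw [ext_iff']; refine ⟨?_, fun i => ?_, fun i j => ?_⟩ <;> simp [N_apply] <;>
      (try split_ifs) <;> ring
  zero_mul x := by rw [ext_iff']; refine ⟨?_, fun i => ?_, fun i j => ?_⟩ <;> simp [N_apply] <;>
      (try split_ifs) <;> ring
  mul_zero x := by rw [ext_iff']; refine ⟨?_, fun i => ?_, fun i j => ?_⟩ <;> simp [N_apply] <;>
      (try split_ifs) <;> ring

instance : Algebra k (Tri k μ) :=
  Algebra.ofModule
    (fun r x y => by rw [ext_iff']; refine ⟨?_, fun i => ?_, fun i j => ?_⟩ <;>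
      simp [N_apply] <;> (try split_ifs) <;> ring)
    (fun r x y => by rw [ext_iff']; refine ⟨?_, fun i => ?_, fun i j => ?_⟩ <;>
      simp [N_apply] <;> (try split_ifs) <;> ring)

/-- Generators of `Tri`. -/
def gen (μ : Fin 3 → Fin 3 → k) (i : Fin 3) : Tri k μ :=
  ⟨0, fun j => if j = i then 1 else 0, 0⟩

@[simp] lemma gen_s (i) : (gen μ i).s = 0 := rfl
@[simp] lemma gen_v (i j) : (gen μ i).v j = if j = i then 1 else 0 := rfl
@[simp] lemma gen_m (i p q) : (gen μ i).m p q = 0 := rfl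

end Tri

section Map
variable {k : Type*} [Field k] {μ : Fin 3 → Fin 3 → k}

lemma gen_rel (hμdiag : ∀ i, μ i i = 1) (hμ : ∀ i j, μ i j * μ j i = 1) (i j : Fin 3) :
    Tri.gen μ j * Tri.gen μ i = μ i j • (Tri.gen μ i * Tri.gen μ j) := by
  fin_cases i <;> fin_cases j <;>
    (rw [Tri.ext_iff']; refine ⟨by simp, fun p => by simp, fun p q => ?_⟩) <;>
    fin_cases p <;> fin_cases q <;>
    simp [Tri.N_apply, hμdiag] <;>
    first
      | linear_combination hμ 0 1
      | linear_combination hμ 1 0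
      | linear_combination hμ 0 2
      | linear_combination hμ 2 0
      | linear_combination hμ 1 2
      | linear_combination hμ 2 1
      | linear_combination -hμ 0 1
      | linear_combination -hμ 0 2
      | linear_combination -hμ 1 2
      | linear_combination -hμ 1 0
      | linear_combination -hμ 2 0
      | linear_combination -hμ 2 1

/-- The evaluation map `S → Tri`. -/
def toTri (hμdiag : ∀ i, μ i i = 1) (hμ : ∀ i j, μ i j * μ j i = 1) :
    RingQuot (SkewRel k μ) →ₐ[k] Tri k μ :=
  RingQuot.liftAlgHom k ⟨FreeAlgebra.lift k (Tri.gen μ), by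
    rintro x y ⟨i, j⟩
    rw [map_mul, map_smul, map_mul]
    simp only [FreeAlgebra.lift_ι_apply]
    exact gen_rel hμdiag hμ i j⟩

lemma toTri_z (hμdiag : ∀ i, μ i i = 1) (hμ : ∀ i j, μ i j * μ j i = 1) (i : Fin 3) :
    toTri hμdiag hμ (z k μ i) = Tri.gen μ i := by
  rw [z, toTri, RingQuot.liftAlgHom_mkAlgHom_apply, FreeAlgebra.lift_ι_apply]

end Map

theorem stmt13 (k : Type*) [Field k] [IsAlgClosed k] (h2 : (2 : k) ≠ 0)
    (μ : Fin 3 → Fin 3 → k) (hμdiag : ∀ i, μ i i = 1)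
    (hμ : ∀ i j, μ i j * μ j i = 1)
    (a b c d e f : k)
    (ha : a ≠ 0) :
    (∃ L1 ∈ (Submodule.span k ({z k μ 0, z k μ 1, z k μ 2} : Set (RingQuot (SkewRel k μ)))),
      ∃ L2 ∈ (Submodule.span k ({z k μ 0, z k μ 1, z k μ 2} : Set (RingQuot (SkewRel k μ)))),
        (a • (z k μ 0 * z k μ 0) + b • (z k μ 1 * z k μ 1) + c • (z k μ 2 * z k μ 2) +
      (2 * d) • (z k μ 0 * z k μ 1) + (2 * e) • (z k μ 0 * z k μ 2) +
      (2 * f) • (z k μ 1 * z k μ 2)) = L1 * L2) ↔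
      (∃ X Y : k, X ^ 2 = d ^ 2 - μ 0 1 * a * b ∧ Y ^ 2 = e ^ 2 - μ 0 2 * a * c ∧
        (μ 1 0 * (d + X) * (e - Y) + μ 1 2 * μ 2 0 * (d - X) * (e + Y) - 2 * a * f) = 0) := by
  constructor
  · rintro ⟨L1, hL1, L2, hL2, hQ⟩
    obtain ⟨α0, α1, α2, rfl⟩ := mem_span_triple hL1
    obtain ⟨β0, β1, β2, rfl⟩ := mem_span_triple hL2
    have hQ' := congrArg (⇑(toTri hμdiag hμ)) hQ
    simp only [map_add, map_smul, map_mul, toTri_z] at hQ'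
    rw [Tri.ext_iff'] at hQ'
    obtain ⟨-, -, hm⟩ := hQ'
    have E00 := hm 0 0
    have E11 := hm 1 1
    have E22 := hm 2 2
    have E01 := hm 0 1
    have E02 := hm 0 2
    have E12 := hm 1 2
    simp [Tri.N_apply] at E00 E11 E22 E01 E02 E12
    subst E00; subst E11; subst E22
    have hd : d = (α0 * β1 + μ 0 1 * α1 * β0) / 2 := by field_simp; linear_combination E01
    have he : e = (α0 * β2 + μ 0 2 * α2 * β0) / 2 := by field_simp; linear_combination E02
    have hf : f = (α1 * β2 + μ 1 2 * α2 * β1) / 2 := by field_simp; linear_combination E12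
    subst hd; subst he; subst hf
    refine ⟨(μ 0 1 * (α1 * β0) - α0 * β1) / 2, (μ 0 2 * (α2 * β0) - α0 * β2) / 2,
      by field_simp; ring, by field_simp; ring, ?_⟩
    linear_combination (norm := (field_simp; ring1)) (α0 * β0 * (α1 * β2)) * hμ 1 0
      + (μ 1 2 * (α0 * β0) * (α2 * β1)) * hμ 2 0
  · rintro ⟨X, Y, hX, hY, hD⟩
    refine ⟨(1 : k) • z k μ 0 + (μ 1 0 * (d + X) / a) • z k μ 1
        + (μ 2 0 * (e + Y) / a) • z k μ 2, ?_,
      a • z k μ 0 + (d - X) • z k μ 1 + (e - Y) • z k μ 2, ?_, ?_⟩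
    · refine Submodule.add_mem _ (Submodule.add_mem _ ?_ ?_) ?_ <;>
        exact Submodule.smul_mem _ _ (Submodule.subset_span (by simp))
    · refine Submodule.add_mem _ (Submodule.add_mem _ ?_ ?_) ?_ <;>
        exact Submodule.smul_mem _ _ (Submodule.subset_span (by simp))
    · rw [mul_linear]
      match_scalars
      · field_simp
      · field_simp
        linear_combination μ 1 0 * hX - a * b * hμ 1 0
      · field_simp
        linear_combination μ 2 0 * hY - a * c * hμ 2 0
      · field_simp
        linear_combination (-(d + X)) * hμ 0 1
      · field_simp
        linear_combination (-(e + Y)) * hμ 0 2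
      · field_simp
        linear_combination -hD
end
end
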